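/- Let ρ: Γ → GL(d,ℝ) be a p-dominated representation with constants C ≥ 1, λ > 0, and let ℓ₀ ∈ ℕ satisfy C e^{−λℓ₀} < 1. Then there exist constants ν ∈ (0,1), c₀ > 0, c₁ > 0 such that for all γ, η ∈ Γ with |γ| ≥ ℓ₀, |η| ≥ ℓ₀ and U_p(ρ(γ)) ≠ U_p(ρ(η)): d(γ,η) ≥ ν(|γ|+|η|) − c₀ − c₁ |log d(U_p(ρ(γ)), U_p(ρ(η)))|. -/

import Mathlib

noncomputable section

namespace Paper

abbrev Euc (d : ℕ) := EuclideanSpace ℝ (Fin d)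

/-- The `k`-th singular value (`1`-indexed) of a `d × d` real matrix, via
the Courant–Fischer max–min characterization. -/
noncomputable def sv {d : ℕ} (A : Matrix (Fin d) (Fin d) ℝ) (k : ℕ) : ℝ :=
  sSup {r : ℝ | ∃ P : Submodule ℝ (Euc d), Module.finrank ℝ P = k ∧
    ∀ v ∈ P, r * ‖v‖ ≤ ‖Matrix.toEuclideanLin A v‖}

/-- The operator norm `‖A‖ = σ₁(A)`. -/
noncomputable def opNorm {d : ℕ} (A : Matrix (Fin d) (Fin d) ℝ) : ℝ := sv A 1

/-- `A` has a gap of index `p`: `σ_p(A) > σ_{p+1}(A)`. -/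
def hasGap {d : ℕ} (A : Matrix (Fin d) (Fin d) ℝ) (p : ℕ) : Prop := sv A (p + 1) < sv A p

/-- `U_p(A)`: the sum of the eigenspaces of `A * A.transpose` corresponding to
eigenvalues `> σ_{p+1}(A)²`, i.e. the span of the `p` largest axes of the
image ellipsoid (when `A` has a gap of index `p`). -/
noncomputable def Uspace {d : ℕ} (A : Matrix (Fin d) (Fin d) ℝ) (p : ℕ) :
    Submodule ℝ (Euc d) :=
  ⨆ μ ∈ {μ : ℝ | sv A (p + 1) ^ 2 < μ},
    Module.End.eigenspace (Matrix.toEuclideanLin (A * A.transpose)) μ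

/-- `S_q(A) := U_q(A⁻¹)`. -/
noncomputable def Sspace {d : ℕ} (A : Matrix (Fin d) (Fin d) ℝ) (q : ℕ) :
    Submodule ℝ (Euc d) :=
  Uspace A⁻¹ q

/-- The angle `∠(w, P) = min { ∠(w,v) : v ∈ P \ {0} }` between a vector and a subspace. -/
noncomputable def angleVS {d : ℕ} (w : Euc d) (P : Submodule ℝ (Euc d)) : ℝ :=
  sInf {θ : ℝ | ∃ v ∈ P, v ≠ 0 ∧ θ = InnerProductGeometry.angle w v}

/-- The angle `∠(P,Q) = min { ∠(v,w) : v ∈ P \ {0}, w ∈ Q \ {0} }` between two subspaces. -/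
noncomputable def angleSS {d : ℕ} (P Q : Submodule ℝ (Euc d)) : ℝ :=
  sInf {θ : ℝ | ∃ v ∈ P, ∃ w ∈ Q, v ≠ 0 ∧ w ≠ 0 ∧ θ = InnerProductGeometry.angle v w}

/-- The distance `d(P,Q) := max_{w ∈ Q \ {0}} sin ∠(w,P)` on the Grassmannian. -/
noncomputable def grDist {d : ℕ} (P Q : Submodule ℝ (Euc d)) : ℝ :=
  sSup {s : ℝ | ∃ w ∈ Q, w ≠ 0 ∧ s = Real.sin (angleVS w P)}

/-- The action of `g ∈ GL(d,ℝ)` on subspaces of `ℝ^d`. -/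
noncomputable def smulSub {d : ℕ} (g : Matrix.GeneralLinearGroup (Fin d) ℝ)
    (P : Submodule ℝ (Euc d)) : Submodule ℝ (Euc d) :=
  P.map (Matrix.toEuclideanLin (g : Matrix (Fin d) (Fin d) ℝ))

section Group

variable {Γ : Type*} [Group Γ]

/-- Word length with respect to a generating set `S`. -/
noncomputable def wordLength (S : Set Γ) (γ : Γ) : ℕ :=
  sInf {n : ℕ | ∃ l : List Γ, l.length = n ∧ (∀ x ∈ l, x ∈ S) ∧ l.prod = γ}

/-- The word metric `d(γ,η) := |η⁻¹γ|`. -/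
noncomputable def wordDist (S : Set Γ) (γ η : Γ) : ℕ := wordLength S (η⁻¹ * γ)

/-- `S` is a finite symmetric generating set of `Γ`. -/
structure IsSymmGen (S : Set Γ) : Prop where
  finite : S.Finite
  symm : ∀ s ∈ S, s⁻¹ ∈ S
  gen : ∀ γ : Γ, ∃ l : List Γ, (∀ x ∈ l, x ∈ S) ∧ l.prod = γ

/-- The Gromov product `(x|y)_w` for the word metric, real-valued. -/
noncomputable def gromovProd (S : Set Γ) (x y w : Γ) : ℝ :=
  ((wordDist S x w : ℝ) + (wordDist S y w : ℝ) - (wordDist S x y : ℝ)) / 2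

/-- `Γ` is word-hyperbolic: Gromov's four point condition holds for the word metric. -/
def IsWordHyperbolic (S : Set Γ) : Prop :=
  ∃ δ : ℝ, 0 ≤ δ ∧ ∀ x y z w : Γ,
    min (gromovProd S x y w) (gromovProd S y z w) - δ ≤ gromovProd S x z w

/-- `ρ` is `p`-dominated, with constants `C`, `lam`:
`σ_{p+1}(ρ γ) / σ_p(ρ γ) ≤ C e^{-lam |γ|}` for all `γ`. -/
def IsDominatedRep {d : ℕ} (S : Set Γ) (ρ : Γ →* Matrix.GeneralLinearGroup (Fin d) ℝ)
    (p : ℕ) (C lam : ℝ) : Prop :=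
  ∀ γ : Γ, sv ((ρ γ : Matrix (Fin d) (Fin d) ℝ)) (p + 1) /
      sv ((ρ γ : Matrix (Fin d) (Fin d) ℝ)) p
    ≤ C * Real.exp (-lam * (wordLength S γ : ℝ))

/-- The limit set `M = ⋂_{n ≥ ℓ₀} closure {U_p(ρ(γ)) : |γ| ≥ n}`, the closure being
taken inside the Grassmannian `Gr_p(ℝ^d)` with the metric `grDist`. -/
def limitSet {d : ℕ} (S : Set Γ) (ρ : Γ →* Matrix.GeneralLinearGroup (Fin d) ℝ)
    (p ℓ₀ : ℕ) : Set (Submodule ℝ (Euc d)) :=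
  ⋂ n ∈ Set.Ici ℓ₀,
    {P : Submodule ℝ (Euc d) | Module.finrank ℝ P = p ∧
      ∀ ε > 0, ∃ γ : Γ, n ≤ wordLength S γ ∧
        grDist P (Uspace ((ρ γ : Matrix (Fin d) (Fin d) ℝ)) p) < ε}

end Group

end Paper

namespace Paper

open scoped LinearAlgebra.Projectivization

/-- `blockProd A n k = A_{n+k-1} ⋯ A_{n+1} A_n`. -/
noncomputable def blockProd {d : ℕ} (A : ℤ → Matrix (Fin d) (Fin d) ℝ) (n : ℤ) :
    ℕ → Matrix (Fin d) (Fin d) ℝ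
  | 0 => 1
  | k + 1 => A (n + k) * blockProd A n k

/-- `I ⊂ ℤ` is an interval. -/
def IsIntervalZ (I : Set ℤ) : Prop :=
  ∀ ⦃a b c : ℤ⦄, a ∈ I → c ∈ I → a ≤ b → b ≤ c → b ∈ I

/-- Membership in the set `𝒟(K,p,μ,c,I)` of dominated sequences of matrices. -/
def memD {d : ℕ} (K : ℝ) (p : ℕ) (μ c : ℝ) (I : Set ℤ)
    (A : ℤ → Matrix (Fin d) (Fin d) ℝ) : Prop :=
  (∀ i ∈ I, IsUnit (A i) ∧ opNorm (A i) ≤ K ∧ opNorm (A i)⁻¹ ≤ K) ∧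
  ∀ n m : ℤ, n ∈ I → m ∈ I → n ≤ m →
    sv (blockProd A n (m - n + 1).toNat) (p + 1) / sv (blockProd A n (m - n + 1).toNat) p
      ≤ c * Real.exp (-μ * ((m : ℝ) - (n : ℝ) + 1))

/-- The jacobian of `A` restricted to the subspace `P`, i.e. the factor by which
`A` scales volume on `P`; computed via the ratio of Gram determinants. -/
noncomputable def jac {d : ℕ} (A : Matrix (Fin d) (Fin d) ℝ) (P : Submodule ℝ (Euc d)) : ℝ :=
  Real.sqrt
    ((Matrix.of fun i j =>
        (inner ℝ (Matrix.toEuclideanLin A ((Module.finBasis ℝ P) i : Euc d))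
          (Matrix.toEuclideanLin A ((Module.finBasis ℝ P) j : Euc d)) : ℝ)).det /
     (Matrix.of fun i j =>
        (inner ℝ (((Module.finBasis ℝ P) i : Euc d)) (((Module.finBasis ℝ P) j : Euc d)) : ℝ)).det)

/-- `χ_k(A)`: the `k`-th largest absolute value of the complex eigenvalues of `A`
(1-indexed, repeated with multiplicity). -/
noncomputable def chi {d : ℕ} (A : Matrix (Fin d) (Fin d) ℝ) (k : ℕ) : ℝ :=
  (((A.map (fun x : ℝ => (x : ℂ))).charpoly.roots.map (fun z => ‖z‖)).sort
    (· ≤ ·)).getD (d - k) 0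

variable {Γ : Type*} [Group Γ]

/-- The translation length `ℓ(γ) = inf_η |η⁻¹ γ η|`. -/
noncomputable def transLength (S : Set Γ) (γ : Γ) : ℕ :=
  sInf {n : ℕ | ∃ η : Γ, wordLength S (η⁻¹ * γ * η) = n}

/-- An `(a,b)`-quasi-geodesic ray starting at the identity. -/
def IsQGRay (S : Set Γ) (a b : ℝ) (γ : ℕ → Γ) : Prop :=
  γ 0 = 1 ∧ ∀ n m : ℕ,
    a⁻¹ * |(n : ℝ) - (m : ℝ)| - b ≤ (wordDist S (γ n) (γ m) : ℝ) ∧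
    (wordDist S (γ n) (γ m) : ℝ) ≤ a * |(n : ℝ) - (m : ℝ)| + b

/-- The (positive) cone type of `γ`. -/
def coneType (S : Set Γ) (γ : Γ) : Set Γ :=
  {η : Γ | wordLength S (η * γ) = wordLength S η + wordLength S γ}

/-- An edge of the geodesic automaton: from `C₁` to `C₂`, labeled by `a`. -/
def IsEdge (S : Set Γ) (C₁ C₂ : Set Γ) (a : Γ) : Prop :=
  a ∈ S ∧ a ∈ C₁ ∧ ∃ γ : Γ, coneType S γ = C₁ ∧ coneType S (a * γ) = C₂

/-- A cone type is recurrent if it lies on a bi-infinite walk of the geodesic automaton. -/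
def IsRecurrentConeType (S : Set Γ) (C : Set Γ) : Prop :=
  ∃ (Cs : ℤ → Set Γ) (as : ℤ → Γ), C = Cs 0 ∧ ∀ n : ℤ, IsEdge S (Cs n) (Cs (n + 1)) (as n)

/-- Quotient topology on the projective space `ℙ(ℝ^d)`. -/
instance {d : ℕ} : TopologicalSpace (ℙ ℝ (Euc d)) :=
  inferInstanceAs (TopologicalSpace (Quotient (projectivizationSetoid ℝ (Euc d))))

lemma toEuclideanLin_injective {d : ℕ} (g : Matrix.GeneralLinearGroup (Fin d) ℝ) :
    Function.Injective (Matrix.toEuclideanLin (g : Matrix (Fin d) (Fin d) ℝ)) := by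
  intro x y hxy
  have h1 : ((g : Matrix (Fin d) (Fin d) ℝ)).mulVec ((WithLp.equiv 2 (Fin d → ℝ)) x)
      = ((g : Matrix (Fin d) (Fin d) ℝ)).mulVec ((WithLp.equiv 2 (Fin d → ℝ)) y) := by
    have h2 := congrArg (WithLp.equiv 2 (Fin d → ℝ)) hxy
    exact h2
  have hinj : Function.Injective ((g : Matrix (Fin d) (Fin d) ℝ)).mulVec :=
    Matrix.mulVec_injective_iff_isUnit.2 (Units.isUnit g)
  exact (WithLp.equiv 2 (Fin d → ℝ)).injective (hinj h1)

/-- The projective action of `g ∈ GL(d,ℝ)` on `ℙ(ℝ^d)`. -/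
noncomputable def projAction {d : ℕ} (g : Matrix.GeneralLinearGroup (Fin d) ℝ) :
    ℙ ℝ (Euc d) → ℙ ℝ (Euc d) :=
  Projectivization.map (Matrix.toEuclideanLin (g : Matrix (Fin d) (Fin d) ℝ))
    (toEuclideanLin_injective g)

/-- The set of points of `ℙ(ℝ^d)` corresponding to lines inside the subspace `P`
(the projectivization of `P`). -/
def projOf {d : ℕ} (P : Submodule ℝ (Euc d)) : Set (ℙ ℝ (Euc d)) :=
  {x | ∃ (v : Euc d) (hv : v ≠ 0), v ∈ P ∧ Projectivization.mk ℝ v hv = x}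

/-- A multicone of index `p`. -/
def IsMulticone {d : ℕ} (p : ℕ) (M : Set (ℙ ℝ (Euc d))) : Prop :=
  IsOpen M ∧
  (∃ P : Submodule ℝ (Euc d), Module.finrank ℝ P = p ∧ projOf P ⊆ M) ∧
  (∃ Q : Submodule ℝ (Euc d), Module.finrank ℝ Q = d - p ∧ Disjoint (projOf Q) M)

/-- A tame multicone: finitely many connected components, with pairwise disjoint closures. -/
def IsTame {d : ℕ} (M : Set (ℙ ℝ (Euc d))) : Prop :=
  {C : Set (ℙ ℝ (Euc d)) | ∃ x ∈ M, C = connectedComponentIn M x}.Finite ∧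
  ∀ x ∈ M, ∀ y ∈ M, connectedComponentIn M x ≠ connectedComponentIn M y →
    closure (connectedComponentIn M x) ∩ closure (connectedComponentIn M y) = ∅

/-- A strictly invariant family of multicones of index `p`, indexed by the
recurrent cone types. -/
def StrictlyInvariantFamily {d : ℕ} (S : Set Γ) (ρ : Γ →* Matrix.GeneralLinearGroup (Fin d) ℝ)
    (p : ℕ) (Mfam : Set Γ → Set (ℙ ℝ (Euc d))) : Prop :=
  (∀ C : Set Γ, IsRecurrentConeType S C → IsMulticone p (Mfam C)) ∧
  ∀ C₁ C₂ : Set Γ, ∀ a : Γ, IsRecurrentConeType S C₁ → IsRecurrentConeType S C₂ →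
    IsEdge S C₁ C₂ a →
    closure (projAction (ρ a) '' Mfam C₁) ⊆ interior (Mfam C₂)

end Paper

/-!
Write `ρ η = ρ γ * ρ k` with `k = γ⁻¹ η`, so that `|k| = d(γ, η)` and `‖ρ k‖, ‖ρ k⁻¹‖ ≤ K ^ d(γ, η)`
for `K` bounding `ρ` on the generators. Splitting vectors along the right singular vectors of
`A = ρ γ` shows that every `w ∈ U_p(A k)` lies within `σ_{p+1}(A) / σ_p(A) * ‖k‖ ‖k⁻¹‖ * ‖w‖` of
`U_p(A)`, so by domination `log d(U_p(ρ γ), U_p(ρ η)) ≤ log C - λ |γ| + 2 log K * d(γ, η)`.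
Since `|η| ≤ |γ| + d(γ, η)`, this is a linear lower bound for `d(γ, η)`.
-/

namespace Paper

open Matrix InnerProductGeometry Real Module.End
open scoped Matrix.Norms.L2Operator RealInnerProductSpace

lemma exists_ne_zero_mem_of_lt_finrank_add {K V : Type*} [DivisionRing K] [AddCommGroup V]
    [Module K V] [FiniteDimensional K V] {P W : Submodule K V}
    (h : Module.finrank K V < Module.finrank K P + Module.finrank K W) :
    ∃ v ∈ P, v ∈ W ∧ v ≠ 0 := by
  have hinf : P ⊓ W ≠ ⊥ := by
    intro hbot
    have := Submodule.finrank_sup_add_finrank_inf_eq P W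
    rw [hbot, finrank_bot] at this
    have := Submodule.finrank_le (P ⊔ W)
    omega
  obtain ⟨v, hv, hv0⟩ := Submodule.exists_mem_ne_zero_of_ne_bot hinf
  exact ⟨v, hv.1, hv.2, hv0⟩

section SingularValues

variable {d : ℕ}

lemma toEuclideanLin_mul_apply (M N : Matrix (Fin d) (Fin d) ℝ) (v : Euc d) :
    toEuclideanLin (M * N) v = toEuclideanLin M (toEuclideanLin N v) := by
  simp

lemma norm_toEuclideanLin_apply_le (M : Matrix (Fin d) (Fin d) ℝ) (v : Euc d) :
    ‖toEuclideanLin M v‖ ≤ ‖M‖ * ‖v‖ :=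
  (toEuclideanCLM (n := Fin d) (𝕜 := ℝ) M).le_opNorm v

lemma toEuclideanLin_inv_apply_self {M : Matrix (Fin d) (Fin d) ℝ} (hM : IsUnit M) (v : Euc d) :
    toEuclideanLin M⁻¹ (toEuclideanLin M v) = v := by
  rw [← toEuclideanLin_mul_apply, nonsing_inv_mul M ((isUnit_iff_isUnit_det M).mp hM)]
  simp

lemma toEuclideanLin_injective_of_isUnit {M : Matrix (Fin d) (Fin d) ℝ} (hM : IsUnit M) :
    Function.Injective (toEuclideanLin M) :=
  Function.LeftInverse.injective (toEuclideanLin_inv_apply_self hM)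

lemma finrank_map_toEuclideanLin {M : Matrix (Fin d) (Fin d) ℝ} (hM : IsUnit M)
    (P : Submodule ℝ (Euc d)) :
    Module.finrank ℝ (P.map (toEuclideanLin M)) = Module.finrank ℝ P :=
  (Submodule.equivMapOfInjective _ (toEuclideanLin_injective_of_isUnit hM) P).finrank_eq.symm

lemma finrank_span_image_orthonormalBasis (b : OrthonormalBasis (Fin d) ℝ (Euc d))
    (T : Finset (Fin d)) : Module.finrank ℝ (Submodule.span ℝ (b '' T)) = T.card := by
  rw [Set.image_eq_range]
  exact (finrank_span_eq_card
    (b.orthonormal.linearIndependent.comp _ Subtype.val_injective)).trans (Fintype.card_coe T)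

lemma exists_finrank_eq {k : ℕ} (hk : k ≤ d) :
    ∃ P : Submodule ℝ (Euc d), Module.finrank ℝ P = k := by
  obtain ⟨T, -, hT⟩ :=
    Finset.exists_subset_card_eq (s := (Finset.univ : Finset (Fin d))) (by simpa using hk)
  exact ⟨_, (finrank_span_image_orthonormalBasis (EuclideanSpace.basisFun (Fin d) ℝ) T).trans hT⟩

lemma le_norm_of_forall_mul_norm_le {A : Matrix (Fin d) (Fin d) ℝ} {P : Submodule ℝ (Euc d)}
    (hP : P ≠ ⊥) {r : ℝ} (h : ∀ v ∈ P, r * ‖v‖ ≤ ‖toEuclideanLin A v‖) : r ≤ ‖A‖ := by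
  obtain ⟨v, hvP, hv0⟩ := Submodule.exists_mem_ne_zero_of_ne_bot hP
  exact le_of_mul_le_mul_right ((h v hvP).trans (norm_toEuclideanLin_apply_le A v))
    (norm_pos_iff.mpr hv0)

lemma le_sv {A : Matrix (Fin d) (Fin d) ℝ} {k : ℕ} (hk : 1 ≤ k) {P : Submodule ℝ (Euc d)}
    (hP : Module.finrank ℝ P = k) {r : ℝ} (h : ∀ v ∈ P, r * ‖v‖ ≤ ‖toEuclideanLin A v‖) :
    r ≤ sv A k := by
  refine le_csSup ⟨‖A‖, ?_⟩ ⟨P, hP, h⟩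
  rintro s ⟨Q, hQ, hs⟩
  refine le_norm_of_forall_mul_norm_le (fun hbot => ?_) hs
  rw [hbot, finrank_bot] at hQ
  omega

lemma sv_le {A : Matrix (Fin d) (Fin d) ℝ} {k : ℕ} (hk : k ≤ d) {B : ℝ}
    (h : ∀ P : Submodule ℝ (Euc d), Module.finrank ℝ P = k → ∀ r : ℝ,
      (∀ v ∈ P, r * ‖v‖ ≤ ‖toEuclideanLin A v‖) → r ≤ B) :
    sv A k ≤ B := by
  obtain ⟨P, hP⟩ := exists_finrank_eq hk
  exact csSup_le ⟨0, P, hP, fun v _ => by simp⟩ fun r ⟨P, hP, hr⟩ => h P hP r hr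

lemma sv_nonneg (A : Matrix (Fin d) (Fin d) ℝ) {k : ℕ} (hk1 : 1 ≤ k) (hk : k ≤ d) :
    0 ≤ sv A k := by
  obtain ⟨P, hP⟩ := exists_finrank_eq hk
  exact le_sv hk1 hP fun v _ => by simp

lemma sv_pos {M : Matrix (Fin d) (Fin d) ℝ} (hM : IsUnit M) {k : ℕ} (hk1 : 1 ≤ k) (hk : k ≤ d) :
    0 < sv M k := by
  obtain ⟨P, hP⟩ := exists_finrank_eq hk
  refine lt_of_lt_of_le (by positivity : 0 < (‖M⁻¹‖ + 1)⁻¹) (le_sv hk1 hP fun v _ => ?_)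
  have hv : ‖v‖ ≤ ‖M⁻¹‖ * ‖toEuclideanLin M v‖ := by
    simpa only [toEuclideanLin_inv_apply_self hM] using
      norm_toEuclideanLin_apply_le M⁻¹ (toEuclideanLin M v)
  rw [inv_mul_le_iff₀ (by positivity)]
  linarith [norm_nonneg (toEuclideanLin M v)]

lemma sv_le_norm_inv_mul_sv_mul (A : Matrix (Fin d) (Fin d) ℝ) {k : Matrix (Fin d) (Fin d) ℝ}
    (hk : IsUnit k) {p : ℕ} (hp1 : 1 ≤ p) (hpd : p ≤ d) :
    sv A p ≤ ‖k⁻¹‖ * sv (A * k) p := by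
  have hki : IsUnit k⁻¹ := isUnit_nonsing_inv_iff.mpr hk
  refine sv_le hpd fun P hP r hr => ?_
  rcases le_or_gt r 0 with hr0 | hr0
  · exact hr0.trans (mul_nonneg (norm_nonneg _) (sv_nonneg _ hp1 hpd))
  have : Nonempty (Fin d) := ⟨⟨0, by omega⟩⟩
  have hpos : 0 < ‖k⁻¹‖ := norm_pos_iff.mpr hki.ne_zero
  suffices r / ‖k⁻¹‖ ≤ sv (A * k) p by rwa [div_le_iff₀' hpos] at this
  refine le_sv hp1 ((finrank_map_toEuclideanLin hki P).trans hP) ?_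
  rintro _ ⟨u, hu, rfl⟩
  have hku : toEuclideanLin (A * k) (toEuclideanLin k⁻¹ u) = toEuclideanLin A u := by
    rw [toEuclideanLin_mul_apply, ← toEuclideanLin_mul_apply k,
      mul_nonsing_inv k ((isUnit_iff_isUnit_det k).mp hk)]
    simp
  rw [hku, div_mul_eq_mul_div, div_le_iff₀' hpos]
  calc r * ‖toEuclideanLin k⁻¹ u‖ ≤ r * (‖k⁻¹‖ * ‖u‖) :=
        mul_le_mul_of_nonneg_left (norm_toEuclideanLin_apply_le _ _) hr0.le
    _ = ‖k⁻¹‖ * (r * ‖u‖) := by ring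
    _ ≤ ‖k⁻¹‖ * ‖toEuclideanLin A u‖ := mul_le_mul_of_nonneg_left (hr u hu) hpos.le

end SingularValues

section Spectral

variable {d : ℕ} {M : Matrix (Fin d) (Fin d) ℝ} {b : OrthonormalBasis (Fin d) ℝ (Euc d)}
  {μ : Fin d → ℝ} {T : Finset (Fin d)} {z : Euc d}

lemma inner_toEuclideanLin_transpose_mul_self (M : Matrix (Fin d) (Fin d) ℝ) (v : Euc d) :
    ⟪toEuclideanLin (Mᵀ * M) v, v⟫ = ‖toEuclideanLin M v‖ ^ 2 := by
  rw [toEuclideanLin_mul_apply, ← conjTranspose_eq_transpose_of_trivial,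
    toEuclideanLin_conjTranspose_eq_adjoint, LinearMap.adjoint_inner_left,
    real_inner_self_eq_norm_sq]

lemma norm_sq_toEuclideanLin_eq_sum (hb : ∀ i, toEuclideanLin (Mᵀ * M) (b i) = μ i • b i)
    (v : Euc d) : ‖toEuclideanLin M v‖ ^ 2 = ∑ i, μ i * ⟪b i, v⟫ ^ 2 := by
  have hv : toEuclideanLin (Mᵀ * M) v = ∑ i, (⟪b i, v⟫ * μ i) • b i := by
    conv_lhs => rw [← b.sum_repr' v]
    simp only [map_sum, map_smul, hb, smul_smul]
  rw [← inner_toEuclideanLin_transpose_mul_self, hv, sum_inner]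
  exact Finset.sum_congr rfl fun i _ => by rw [real_inner_smul_left]; ring

lemma eigenvalue_transpose_mul_self_nonneg
    (hb : ∀ i, toEuclideanLin (Mᵀ * M) (b i) = μ i • b i) (j : Fin d) : 0 ≤ μ j := by
  have h := inner_toEuclideanLin_transpose_mul_self M (b j)
  rw [hb, real_inner_smul_left, real_inner_self_eq_norm_sq, b.orthonormal.1 j] at h
  nlinarith [h]

lemma inner_eq_zero_of_mem_span_image (hz : z ∈ Submodule.span ℝ (b '' T)) {j : Fin d}
    (hj : j ∉ T) : ⟪b j, z⟫ = 0 := by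
  induction hz using Submodule.span_induction with
  | mem x hx =>
      obtain ⟨i, hiT, rfl⟩ := hx
      exact b.orthonormal.2 fun hji => hj (hji ▸ hiT)
  | zero => simp
  | add x y _ _ hx hy => rw [inner_add_right, hx, hy, add_zero]
  | smul c x _ hx => rw [real_inner_smul_right, hx, mul_zero]

lemma sum_smul_mem_span_image (b : OrthonormalBasis (Fin d) ℝ (Euc d)) (T : Finset (Fin d))
    (f : Fin d → ℝ) : ∑ i ∈ T, f i • b i ∈ Submodule.span ℝ (b '' T) :=
  Submodule.sum_mem _ fun i hi => Submodule.smul_mem _ _ (Submodule.subset_span ⟨i, hi, rfl⟩)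

lemma sum_mul_inner_sq_eq_of_mem_span_image (hz : z ∈ Submodule.span ℝ (b '' T))
    (f : Fin d → ℝ) :
    ∑ i, f i * ⟪b i, z⟫ ^ 2 = ∑ i ∈ T, f i * ⟪b i, z⟫ ^ 2 :=
  (Finset.sum_subset (Finset.subset_univ T) fun i _ hi => by
    rw [inner_eq_zero_of_mem_span_image hz hi]; ring).symm

lemma norm_sq_eq_sum_of_mem_span_image (hz : z ∈ Submodule.span ℝ (b '' T)) :
    ‖z‖ ^ 2 = ∑ i ∈ T, ⟪b i, z⟫ ^ 2 := by
  have h := sum_mul_inner_sq_eq_of_mem_span_image hz 1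
  simp only [Pi.one_apply, one_mul] at h
  rw [← b.sum_sq_inner_right, h]

lemma norm_toEuclideanLin_le_of_mem_span_image
    (hb : ∀ i, toEuclideanLin (Mᵀ * M) (b i) = μ i • b i) {s : ℝ} (hs : 0 ≤ s)
    (hT : ∀ i ∈ T, μ i ≤ s ^ 2) (hz : z ∈ Submodule.span ℝ (b '' T)) :
    ‖toEuclideanLin M z‖ ≤ s * ‖z‖ := by
  refine le_of_pow_le_pow_left₀ two_ne_zero (by positivity) ?_
  rw [mul_pow, norm_sq_toEuclideanLin_eq_sum hb, sum_mul_inner_sq_eq_of_mem_span_image hz,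
    norm_sq_eq_sum_of_mem_span_image hz, Finset.mul_sum]
  exact Finset.sum_le_sum fun i hi => mul_le_mul_of_nonneg_right (hT i hi) (sq_nonneg _)

lemma le_norm_toEuclideanLin_of_mem_span_image
    (hb : ∀ i, toEuclideanLin (Mᵀ * M) (b i) = μ i • b i) {s : ℝ}
    (hT : ∀ i ∈ T, s ^ 2 ≤ μ i) (hz : z ∈ Submodule.span ℝ (b '' T)) :
    s * ‖z‖ ≤ ‖toEuclideanLin M z‖ := by
  refine le_of_pow_le_pow_left₀ two_ne_zero (norm_nonneg _) ?_
  rw [mul_pow, norm_sq_toEuclideanLin_eq_sum hb, sum_mul_inner_sq_eq_of_mem_span_image hz,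
    norm_sq_eq_sum_of_mem_span_image hz, Finset.mul_sum]
  exact Finset.sum_le_sum fun i hi => mul_le_mul_of_nonneg_right (hT i hi) (sq_nonneg _)

end Spectral

section Gram

variable {d : ℕ} {M : Matrix (Fin d) (Fin d) ℝ} {p : ℕ}

lemma isHermitian_transpose_mul_self (M : Matrix (Fin d) (Fin d) ℝ) : (Mᵀ * M).IsHermitian := by
  simpa only [conjTranspose_eq_transpose_of_trivial] using isHermitian_conjTranspose_mul_self M

noncomputable def gramBasis (M : Matrix (Fin d) (Fin d) ℝ) : OrthonormalBasis (Fin d) ℝ (Euc d) :=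
  (isHermitian_transpose_mul_self M).eigenvectorBasis

noncomputable def gramEigenvalues (M : Matrix (Fin d) (Fin d) ℝ) : Fin d → ℝ :=
  (isHermitian_transpose_mul_self M).eigenvalues

lemma toEuclideanLin_gramBasis (M : Matrix (Fin d) (Fin d) ℝ) (i : Fin d) :
    toEuclideanLin (Mᵀ * M) (gramBasis M i) = gramEigenvalues M i • gramBasis M i := by
  apply (WithLp.equiv 2 _).injective
  simpa [gramBasis, gramEigenvalues] using
    (isHermitian_transpose_mul_self M).mulVec_eigenvectorBasis i

noncomputable def topIndices (M : Matrix (Fin d) (Fin d) ℝ) (p : ℕ) : Finset (Fin d) :=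
  {i | sv M (p + 1) ^ 2 < gramEigenvalues M i}

noncomputable def topSpan (M : Matrix (Fin d) (Fin d) ℝ) (p : ℕ) : Submodule ℝ (Euc d) :=
  Submodule.span ℝ (gramBasis M '' topIndices M p)

lemma gramEigenvalues_le_of_notMem {i : Fin d} (hi : i ∉ topIndices M p) :
    gramEigenvalues M i ≤ sv M (p + 1) ^ 2 := by
  simpa [topIndices] using hi

lemma le_sv_of_le_gramEigenvalues {T : Finset (Fin d)} {k : ℕ} (hk : 1 ≤ k) (hT : T.card = k)
    {s : ℝ} (hs : ∀ i ∈ T, s ^ 2 ≤ gramEigenvalues M i) : s ≤ sv M k :=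
  le_sv hk ((finrank_span_image_orthonormalBasis _ T).trans hT) fun _ hv =>
    le_norm_toEuclideanLin_of_mem_span_image (toEuclideanLin_gramBasis M) hs hv

lemma sv_le_of_gramEigenvalues_le {T : Finset (Fin d)} {k : ℕ} (hk : k ≤ d)
    (hT : d < k + T.card) {s : ℝ} (hs0 : 0 ≤ s) (hs : ∀ i ∈ T, gramEigenvalues M i ≤ s ^ 2) :
    sv M k ≤ s := by
  refine sv_le hk fun P hP r hr => ?_
  obtain ⟨v, hvP, hvT, hv0⟩ := exists_ne_zero_mem_of_lt_finrank_add (P := P)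
    (W := Submodule.span ℝ (gramBasis M '' T))
    (by rwa [finrank_euclideanSpace_fin, hP, finrank_span_image_orthonormalBasis])
  refine le_of_mul_le_mul_right ((hr v hvP).trans ?_) (norm_pos_iff.mpr hv0)
  exact norm_toEuclideanLin_le_of_mem_span_image (toEuclideanLin_gramBasis M) hs0 hs hvT

lemma card_topIndices_le : (topIndices M p).card ≤ p := by
  by_contra! hcard
  have hpd : p + 1 ≤ d := by simpa using hcard.trans_le (Finset.card_le_univ _)
  obtain ⟨T, hTtop, hT⟩ := Finset.exists_subset_card_eq hcard
  obtain ⟨j, hjT, hjmin⟩ := T.exists_min_image (gramEigenvalues M)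
    (Finset.card_pos.mp (by omega))
  have hj0 := eigenvalue_transpose_mul_self_nonneg (toEuclideanLin_gramBasis M) j
  have hle : √(gramEigenvalues M j) ≤ sv M (p + 1) :=
    le_sv_of_le_gramEigenvalues (by omega) hT fun i hi => by
      rw [Real.sq_sqrt hj0]; exact hjmin i hi
  have hlt : sv M (p + 1) ^ 2 < gramEigenvalues M j := by
    simpa [topIndices] using hTtop hjT
  nlinarith [Real.sq_sqrt hj0, Real.sqrt_nonneg (gramEigenvalues M j),
    sv_nonneg M (Nat.le_add_left 1 p) hpd]

lemma card_topIndices (hp1 : 1 ≤ p) (hpd : p + 1 ≤ d) (hgap : hasGap M p) :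
    (topIndices M p).card = p := by
  refine le_antisymm card_topIndices_le (not_lt.mp fun hcard => ?_)
  have hle : sv M p ≤ sv M (p + 1) :=
    sv_le_of_gramEigenvalues_le (T := (topIndices M p)ᶜ) (by omega)
      (by rw [Finset.card_compl, Fintype.card_fin]; omega)
      (sv_nonneg M (by omega) hpd) fun i hi => gramEigenvalues_le_of_notMem (Finset.mem_compl.mp hi)
  exact absurd hgap (not_lt.mpr hle)

lemma sq_sv_le_gramEigenvalues (hp1 : 1 ≤ p) (hpd : p + 1 ≤ d) (hgap : hasGap M p) {j : Fin d}
    (hj : j ∈ topIndices M p) : sv M p ^ 2 ≤ gramEigenvalues M j := by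
  have hj0 := eigenvalue_transpose_mul_self_nonneg (toEuclideanLin_gramBasis M) j
  have hjtop : sv M (p + 1) ^ 2 < gramEigenvalues M j := by simpa [topIndices] using hj
  have hle : sv M p ≤ √(gramEigenvalues M j) := by
    refine sv_le_of_gramEigenvalues_le (T := insert j (topIndices M p)ᶜ) (by omega) ?_
      (Real.sqrt_nonneg _) fun i hi => ?_
    · rw [Finset.card_insert_of_notMem (by simpa using hj), Finset.card_compl, Fintype.card_fin,
        card_topIndices hp1 hpd hgap]
      omega
    · rw [Real.sq_sqrt hj0]
      rcases Finset.mem_insert.mp hi with rfl | hi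
      · exact le_rfl
      · exact (gramEigenvalues_le_of_notMem (Finset.mem_compl.mp hi)).trans hjtop.le
  nlinarith [Real.sq_sqrt hj0, sv_nonneg M hp1 (by omega)]

end Gram

section Uspace

variable {d : ℕ} {M : Matrix (Fin d) (Fin d) ℝ} {p : ℕ}

lemma eigenspace_mul_transpose (hM : IsUnit M) (μ : ℝ) :
    eigenspace (toEuclideanLin (M * Mᵀ)) μ
      = (eigenspace (toEuclideanLin (Mᵀ * M)) μ).map (toEuclideanLin M) := by
  have hdet := (isUnit_iff_isUnit_det M).mp hM
  ext w
  simp only [Submodule.mem_map, mem_eigenspace_iff]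
  constructor
  · intro hw
    refine ⟨toEuclideanLin M⁻¹ w, ?_, ?_⟩
    · rw [← toEuclideanLin_mul_apply, ← map_smul, ← hw, ← toEuclideanLin_mul_apply,
        Matrix.mul_assoc, mul_nonsing_inv M hdet, Matrix.mul_one, ← Matrix.mul_assoc,
        nonsing_inv_mul M hdet, Matrix.one_mul]
    · rw [← toEuclideanLin_mul_apply, mul_nonsing_inv M hdet]
      simp
  · rintro ⟨z, hz, rfl⟩
    rw [← toEuclideanLin_mul_apply, Matrix.mul_assoc, toEuclideanLin_mul_apply, hz, map_smul]

lemma inner_gramBasis_eq_zero_of_mem_eigenspace {μ : ℝ} {v : Euc d}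
    (hv : v ∈ eigenspace (toEuclideanLin (Mᵀ * M)) μ) {i : Fin d}
    (hμ : gramEigenvalues M i ≠ μ) : ⟪gramBasis M i, v⟫ = 0 := by
  have hsymm := isSymmetric_toEuclideanLin_iff.mpr (isHermitian_transpose_mul_self M)
  have h := hsymm (gramBasis M i) v
  rw [mem_eigenspace_iff.mp hv, toEuclideanLin_gramBasis, real_inner_smul_left,
    real_inner_smul_right] at h
  by_contra h0
  exact hμ (mul_right_cancel₀ h0 h)

lemma iSup_eigenspace_transpose_mul_self (M : Matrix (Fin d) (Fin d) ℝ) (p : ℕ) :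
    ⨆ μ ∈ {μ : ℝ | sv M (p + 1) ^ 2 < μ}, eigenspace (toEuclideanLin (Mᵀ * M)) μ
      = topSpan M p := by
  apply le_antisymm
  · refine iSup₂_le fun μ hμ v hv => ?_
    have hv_eq : v = ∑ i ∈ topIndices M p, ⟪gramBasis M i, v⟫ • gramBasis M i := by
      conv_lhs => rw [← (gramBasis M).sum_repr' v]
      refine (Finset.sum_subset (Finset.subset_univ _) fun i _ hi => ?_).symm
      rw [inner_gramBasis_eq_zero_of_mem_eigenspace hv
        ((gramEigenvalues_le_of_notMem hi).trans_lt hμ).ne, zero_smul]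
    rw [hv_eq]
    exact sum_smul_mem_span_image _ _ _
  · rw [topSpan, Submodule.span_le]
    rintro _ ⟨i, hi, rfl⟩
    have hi' : sv M (p + 1) ^ 2 < gramEigenvalues M i := by simpa [topIndices] using hi
    exact le_iSup₂ (f := fun μ _ => eigenspace (toEuclideanLin (Mᵀ * M)) μ) _ hi'
      (mem_eigenspace_iff.mpr (toEuclideanLin_gramBasis M i))

lemma Uspace_eq_map_topSpan (hM : IsUnit M) (p : ℕ) :
    Uspace M p = (topSpan M p).map (toEuclideanLin M) := by
  simp_rw [Uspace, eigenspace_mul_transpose hM, ← Submodule.map_iSup,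
    iSup_eigenspace_transpose_mul_self]

lemma finrank_Uspace (hM : IsUnit M) (hp1 : 1 ≤ p) (hpd : p + 1 ≤ d) (hgap : hasGap M p) :
    Module.finrank ℝ (Uspace M p) = p := by
  rw [Uspace_eq_map_topSpan hM, finrank_map_toEuclideanLin hM, topSpan,
    finrank_span_image_orthonormalBasis, card_topIndices hp1 hpd hgap]

lemma Uspace_ne_bot (hM : IsUnit M) (hp1 : 1 ≤ p) (hpd : p + 1 ≤ d) (hgap : hasGap M p) :
    Uspace M p ≠ ⊥ := by
  intro h
  have := finrank_Uspace hM hp1 hpd hgap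
  rw [h, finrank_bot] at this
  omega

end Uspace

lemma sin_angle_mul_norm_le_norm_sub {V : Type*} [NormedAddCommGroup V] [InnerProductSpace ℝ V]
    (w u : V) : sin (angle w u) * ‖w‖ ≤ ‖w - u‖ := by
  refine le_of_pow_le_pow_left₀ two_ne_zero (norm_nonneg _) ?_
  have hcos := cos_angle_mul_norm_mul_norm w u
  rw [mul_pow, sin_sq, norm_sub_sq_real, ← hcos]
  nlinarith [sq_nonneg (‖u‖ - cos (angle w u) * ‖w‖)]

section Angles

variable {d : ℕ} {P Q : Submodule ℝ (Euc d)} {w v : Euc d}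

lemma angleVS_nonneg (w : Euc d) (P : Submodule ℝ (Euc d)) : 0 ≤ angleVS w P :=
  Real.sInf_nonneg fun _ ⟨_, _, _, hθ⟩ => hθ ▸ angle_nonneg _ _

lemma angleVS_le_angle (hv : v ∈ P) (hv0 : v ≠ 0) : angleVS w P ≤ angle w v :=
  csInf_le ⟨0, fun _ ⟨_, _, _, hθ⟩ => hθ ▸ angle_nonneg _ _⟩ ⟨v, hv, hv0, rfl⟩

lemma angleVS_le_pi_sub_angle (hv : v ∈ P) (hv0 : v ≠ 0) : angleVS w P ≤ π - angle w v := by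
  rw [← angle_neg_right]
  exact angleVS_le_angle (P.neg_mem hv) (neg_ne_zero.mpr hv0)

lemma angleVS_le_pi_div_two (hP : P ≠ ⊥) (w : Euc d) : angleVS w P ≤ π / 2 := by
  obtain ⟨v, hv, hv0⟩ := Submodule.exists_mem_ne_zero_of_ne_bot hP
  linarith [angleVS_le_angle (w := w) hv hv0, angleVS_le_pi_sub_angle (w := w) hv hv0]

lemma sin_angleVS_le_sin_angle (hv : v ∈ P) (hv0 : v ≠ 0) :
    sin (angleVS w P) ≤ sin (angle w v) := by
  have h0 := angleVS_nonneg w P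
  have h1 := angleVS_le_angle (w := w) hv hv0
  have h2 := angleVS_le_pi_sub_angle (w := w) hv hv0
  rcases le_or_gt (angle w v) (π / 2) with hθ | hθ
  · exact sin_le_sin_of_le_of_le_pi_div_two (by linarith [Real.pi_pos]) hθ h1
  · rw [← sin_pi_sub (angle w v)]
    exact sin_le_sin_of_le_of_le_pi_div_two (by linarith [Real.pi_pos]) (by linarith) h2

lemma sin_angleVS_mul_norm_le_norm_sub {u : Euc d} (hu : u ∈ P) :
    sin (angleVS w P) * ‖w‖ ≤ ‖w - u‖ := by
  rcases eq_or_ne u 0 with rfl | hu0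
  · simpa using mul_le_mul_of_nonneg_right (sin_le_one (angleVS w P)) (norm_nonneg w)
  · exact (mul_le_mul_of_nonneg_right (sin_angleVS_le_sin_angle hu hu0) (norm_nonneg w)).trans
      (sin_angle_mul_norm_le_norm_sub w u)

/-- For `v ∈ P`, `cos ∠(w, v) ≤ ‖P.starProjection w‖ / ‖w‖ < 1`. -/
lemma angleVS_pos (hP : P ≠ ⊥) (hw : w ∉ P) : 0 < angleVS w P := by
  have hw0 : w ≠ 0 := fun h => hw (h ▸ P.zero_mem)
  have hwn : 0 < ‖w‖ := norm_pos_iff.mpr hw0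
  set c := ‖P.starProjection w‖ / ‖w‖
  have hc : c < 1 := by
    rw [div_lt_one hwn]
    refine (P.norm_starProjection_apply_le w).lt_of_ne fun h => hw ?_
    exact (P.mem_iff_norm_starProjection w).mpr h
  obtain ⟨v₀, hv₀, hv₀0⟩ := Submodule.exists_mem_ne_zero_of_ne_bot hP
  refine (Real.arccos_pos.mpr hc).trans_le (le_csInf ⟨_, v₀, hv₀, hv₀0, rfl⟩ ?_)
  rintro _ ⟨v, hv, hv0, rfl⟩
  refine Real.arccos_le_arccos ?_
  have hvn : 0 < ‖v‖ := norm_pos_iff.mpr hv0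
  rw [div_le_div_iff₀ (by positivity) hwn, ← P.starProjection_eq_self_iff.mpr hv,
    ← P.inner_starProjection_left_eq_right, P.starProjection_eq_self_iff.mpr hv]
  calc ⟪P.starProjection w, v⟫ * ‖w‖ ≤ ‖P.starProjection w‖ * ‖v‖ * ‖w‖ :=
        mul_le_mul_of_nonneg_right (real_inner_le_norm _ _) hwn.le
    _ = ‖P.starProjection w‖ * (‖w‖ * ‖v‖) := by ring

lemma grDist_pos (hP : P ≠ ⊥) (hQP : ¬Q ≤ P) : 0 < grDist P Q := by
  obtain ⟨w, hwQ, hwP⟩ := SetLike.not_le_iff_exists.mp hQP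
  have hw0 : w ≠ 0 := fun h => hwP (h ▸ P.zero_mem)
  refine (sin_pos_of_pos_of_lt_pi (angleVS_pos hP hwP) ?_).trans_le
    (le_csSup ⟨1, fun _ ⟨_, _, _, hs⟩ => hs ▸ sin_le_one _⟩ ⟨w, hwQ, hw0, rfl⟩)
  linarith [angleVS_le_pi_div_two hP w, Real.pi_pos]

lemma grDist_le_of_forall_exists_norm_sub_le (hQ : Q ≠ ⊥) {ε : ℝ}
    (h : ∀ w ∈ Q, ∃ u ∈ P, ‖w - u‖ ≤ ε * ‖w‖) : grDist P Q ≤ ε := by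
  obtain ⟨w₀, hw₀, hw₀0⟩ := Submodule.exists_mem_ne_zero_of_ne_bot hQ
  refine csSup_le ⟨_, w₀, hw₀, hw₀0, rfl⟩ ?_
  rintro _ ⟨w, hw, hw0, rfl⟩
  obtain ⟨u, hu, hwu⟩ := h w hw
  exact le_of_mul_le_mul_right ((sin_angleVS_mul_norm_le_norm_sub hu).trans hwu)
    (norm_pos_iff.mpr hw0)

end Angles

section Perturbation

variable {d : ℕ} {A k : Matrix (Fin d) (Fin d) ℝ} {p : ℕ}

lemma exists_preimage_of_mem_Uspace (hA : IsUnit A) (hp1 : 1 ≤ p) (hpd : p + 1 ≤ d)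
    (hgap : hasGap A p) {w : Euc d} (hw : w ∈ Uspace A p) :
    ∃ z, toEuclideanLin A z = w ∧ sv A p * ‖z‖ ≤ ‖w‖ := by
  rw [Uspace_eq_map_topSpan hA] at hw
  obtain ⟨z, hz, rfl⟩ := hw
  exact ⟨z, rfl, le_norm_toEuclideanLin_of_mem_span_image (toEuclideanLin_gramBasis A)
    (fun _ hi => sq_sv_le_gramEigenvalues hp1 hpd hgap hi) hz⟩

/-- Split `y` along the eigenvectors of `Aᵀ A`: `A` maps the top part into `Uspace A p` and
scales the rest by at most `σ_{p+1}(A)`. -/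
lemma exists_mem_Uspace_norm_sub_le (hA : IsUnit A) (hp1 : 1 ≤ p) (hpd : p + 1 ≤ d)
    (y : Euc d) : ∃ u ∈ Uspace A p, ‖toEuclideanLin A y - u‖ ≤ sv A (p + 1) * ‖y‖ := by
  set b := gramBasis A
  set top := topIndices A p
  set yG := ∑ i ∈ top, ⟪b i, y⟫ • b i
  set yL := ∑ i ∈ topᶜ, ⟪b i, y⟫ • b i
  have hyL : yL ∈ Submodule.span ℝ (b '' ↑topᶜ) := sum_smul_mem_span_image b _ _
  have hy : y - yG = yL := by
    rw [sub_eq_iff_eq_add', Finset.sum_add_sum_compl, b.sum_repr']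
  have hyLy : ‖yL‖ ≤ ‖y‖ := by
    refine le_of_pow_le_pow_left₀ two_ne_zero (norm_nonneg _) ?_
    have hcoord : ∀ i ∈ topᶜ, ⟪b i, yL⟫ ^ 2 = ⟪b i, y⟫ ^ 2 := fun i hi => by
      rw [← hy, inner_sub_right, inner_eq_zero_of_mem_span_image
        (sum_smul_mem_span_image b top _) (Finset.mem_compl.mp hi), sub_zero]
    rw [norm_sq_eq_sum_of_mem_span_image hyL, Finset.sum_congr rfl hcoord,
      ← b.sum_sq_inner_right]
    exact Finset.sum_le_sum_of_subset_of_nonneg (Finset.subset_univ _) fun _ _ _ => sq_nonneg _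
  refine ⟨toEuclideanLin A yG, ?_, ?_⟩
  · rw [Uspace_eq_map_topSpan hA]
    exact Submodule.mem_map_of_mem (sum_smul_mem_span_image b top _)
  · rw [← map_sub, hy]
    calc ‖toEuclideanLin A yL‖ ≤ sv A (p + 1) * ‖yL‖ :=
          norm_toEuclideanLin_le_of_mem_span_image (toEuclideanLin_gramBasis A)
            (sv_nonneg A (by omega) hpd)
            (fun _ hi => gramEigenvalues_le_of_notMem (Finset.mem_compl.mp hi)) hyL
      _ ≤ sv A (p + 1) * ‖y‖ := mul_le_mul_of_nonneg_left hyLy (sv_nonneg A (by omega) hpd)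

lemma exists_mem_Uspace_norm_sub_le_of_mem_Uspace_mul (hA : IsUnit A) (hk : IsUnit k)
    (hp1 : 1 ≤ p) (hpd : p + 1 ≤ d) (hgap : hasGap (A * k) p) {w : Euc d}
    (hw : w ∈ Uspace (A * k) p) :
    ∃ u ∈ Uspace A p, ‖w - u‖ ≤ sv A (p + 1) / sv A p * (‖k‖ * ‖k⁻¹‖) * ‖w‖ := by
  obtain ⟨z, rfl, hz⟩ := exists_preimage_of_mem_Uspace (hA.mul hk) hp1 hpd hgap hw
  obtain ⟨u, hu, hAu⟩ := exists_mem_Uspace_norm_sub_le hA hp1 hpd (toEuclideanLin k z)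
  refine ⟨u, hu, ?_⟩
  rw [toEuclideanLin_mul_apply]
  have hsvA := sv_pos hA hp1 (by omega)
  have hy : sv A p * ‖toEuclideanLin k z‖
      ≤ ‖k‖ * ‖k⁻¹‖ * ‖toEuclideanLin A (toEuclideanLin k z)‖ := by
    rw [← toEuclideanLin_mul_apply]
    calc sv A p * ‖toEuclideanLin k z‖ ≤ ‖k⁻¹‖ * sv (A * k) p * (‖k‖ * ‖z‖) :=
          mul_le_mul (sv_le_norm_inv_mul_sv_mul A hk hp1 (by omega))
            (norm_toEuclideanLin_apply_le k z) (norm_nonneg _)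
            (mul_nonneg (norm_nonneg _) (sv_nonneg _ hp1 (by omega)))
      _ = ‖k‖ * ‖k⁻¹‖ * (sv (A * k) p * ‖z‖) := by ring
      _ ≤ ‖k‖ * ‖k⁻¹‖ * ‖toEuclideanLin (A * k) z‖ :=
          mul_le_mul_of_nonneg_left hz (by positivity)
  calc _ ≤ sv A (p + 1) * ‖toEuclideanLin k z‖ := hAu
    _ = sv A (p + 1) / sv A p * (sv A p * ‖toEuclideanLin k z‖) := by field_simp
    _ ≤ _ := by
        rw [mul_assoc]
        exact mul_le_mul_of_nonneg_left hy
          (div_nonneg (sv_nonneg A (by omega) hpd) hsvA.le)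

lemma grDist_Uspace_mul_le (hA : IsUnit A) (hk : IsUnit k) (hp1 : 1 ≤ p) (hpd : p + 1 ≤ d)
    (hgap : hasGap (A * k) p) :
    grDist (Uspace A p) (Uspace (A * k) p) ≤ sv A (p + 1) / sv A p * (‖k‖ * ‖k⁻¹‖) :=
  grDist_le_of_forall_exists_norm_sub_le (Uspace_ne_bot (hA.mul hk) hp1 hpd hgap) fun _ hw =>
    exists_mem_Uspace_norm_sub_le_of_mem_Uspace_mul hA hk hp1 hpd hgap hw

end Perturbation

section WordMetric

variable {Γ : Type*} [Group Γ] {S : Set Γ}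

lemma exists_list_length_eq_wordLength (hS : IsSymmGen S) (γ : Γ) :
    ∃ l : List Γ, l.length = wordLength S γ ∧ (∀ x ∈ l, x ∈ S) ∧ l.prod = γ := by
  obtain ⟨l, hl, hp⟩ := hS.gen γ
  exact Nat.sInf_mem (s := {n | ∃ l : List Γ, l.length = n ∧ (∀ x ∈ l, x ∈ S) ∧ l.prod = γ})
    ⟨l.length, l, rfl, hl, hp⟩

lemma wordLength_le_length {γ : Γ} {l : List Γ} (hl : ∀ x ∈ l, x ∈ S) (hp : l.prod = γ) :
    wordLength S γ ≤ l.length :=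
  Nat.sInf_le ⟨l, rfl, hl, hp⟩

lemma wordLength_mul_le (hS : IsSymmGen S) (γ η : Γ) :
    wordLength S (γ * η) ≤ wordLength S γ + wordLength S η := by
  obtain ⟨l₁, hlen₁, hmem₁, rfl⟩ := exists_list_length_eq_wordLength hS γ
  obtain ⟨l₂, hlen₂, hmem₂, rfl⟩ := exists_list_length_eq_wordLength hS η
  rw [← hlen₁, ← hlen₂, ← List.length_append, ← List.prod_append]
  exact wordLength_le_length (fun x hx => (List.mem_append.mp hx).elim (hmem₁ x) (hmem₂ x)) rfl

lemma wordLength_inv_le (hS : IsSymmGen S) (γ : Γ) : wordLength S γ⁻¹ ≤ wordLength S γ := by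
  obtain ⟨l, hlen, hmem, rfl⟩ := exists_list_length_eq_wordLength hS γ
  rw [← hlen, ← List.length_map (f := fun x : Γ => x⁻¹), ← List.length_reverse]
  refine wordLength_le_length (fun x hx => ?_) (List.prod_inv_reverse l).symm
  obtain ⟨a, ha, rfl⟩ := List.mem_map.mp (List.mem_reverse.mp hx)
  exact hS.symm a (hmem a ha)

lemma wordLength_inv (hS : IsSymmGen S) (γ : Γ) : wordLength S γ⁻¹ = wordLength S γ :=
  (wordLength_inv_le hS γ).antisymm (by simpa using wordLength_inv_le hS γ⁻¹)

lemma wordLength_inv_mul (hS : IsSymmGen S) (γ η : Γ) :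
    wordLength S (γ⁻¹ * η) = wordDist S γ η := by
  rw [wordDist, ← wordLength_inv hS]
  simp

lemma wordLength_le_add_wordDist (hS : IsSymmGen S) (γ η : Γ) :
    wordLength S η ≤ wordLength S γ + wordDist S γ η := by
  simpa [← wordLength_inv_mul hS] using wordLength_mul_le hS γ (γ⁻¹ * η)

lemma norm_le_pow_wordLength {R : Type*} [SeminormedRing R] [NormOneClass R]
    (hS : IsSymmGen S) (f : Γ →* R) {K : ℝ} (hK : ∀ s ∈ S, ‖f s‖ ≤ K) (γ : Γ) :
    ‖f γ‖ ≤ K ^ wordLength S γ := by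
  obtain ⟨l, hlen, hmem, rfl⟩ := exists_list_length_eq_wordLength hS γ
  rw [← hlen]
  clear hlen
  induction l with
  | nil => simp
  | cons a l ih =>
      have ha := hK a (hmem a List.mem_cons_self)
      rw [List.prod_cons, map_mul, List.length_cons, pow_succ']
      exact (norm_mul_le _ _).trans (mul_le_mul ha
        (ih fun x hx => hmem x (List.mem_cons_of_mem a hx)) (norm_nonneg _)
        ((norm_nonneg _).trans ha))

end WordMetric

section Representation

variable {d : ℕ} {Γ : Type*} [Group Γ] {S : Set Γ}
  {ρ : Γ →* Matrix.GeneralLinearGroup (Fin d) ℝ} {p : ℕ} {C lam : ℝ}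

lemma hasGap_of_isDominatedRep (hp1 : 1 ≤ p) (hpd : p ≤ d) (hdom : IsDominatedRep S ρ p C lam)
    (hC : 0 ≤ C) (hlam : 0 ≤ lam) {ℓ₀ : ℕ} (hℓ₀ : C * exp (-lam * ℓ₀) < 1) {γ : Γ}
    (hγ : ℓ₀ ≤ wordLength S γ) : hasGap (ρ γ : Matrix (Fin d) (Fin d) ℝ) p := by
  have hsv := sv_pos (ρ γ).isUnit hp1 hpd
  have hexp : C * exp (-lam * wordLength S γ) ≤ C * exp (-lam * ℓ₀) := by
    have hγ' : (ℓ₀ : ℝ) ≤ wordLength S γ := by exact_mod_cast hγ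
    exact mul_le_mul_of_nonneg_left (exp_le_exp.mpr (by nlinarith)) hC
  exact (div_lt_one hsv).mp ((hdom γ).trans_lt (hexp.trans_lt hℓ₀))

lemma log_grDist_Uspace_le (hS : IsSymmGen S) (hp1 : 1 ≤ p) (hpd : p + 1 ≤ d)
    (hdom : IsDominatedRep S ρ p C lam) (hC : 0 < C) {K : ℝ} (hK0 : 0 < K)
    (hK : ∀ s ∈ S, ‖(ρ s : Matrix (Fin d) (Fin d) ℝ)‖ ≤ K) {γ η : Γ}
    (hγ : hasGap (ρ γ : Matrix (Fin d) (Fin d) ℝ) p)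
    (hη : hasGap (ρ η : Matrix (Fin d) (Fin d) ℝ) p)
    (hne : Uspace (ρ γ : Matrix (Fin d) (Fin d) ℝ) p ≠ Uspace (ρ η : Matrix (Fin d) (Fin d) ℝ) p) :
    log (grDist (Uspace (ρ γ : Matrix (Fin d) (Fin d) ℝ) p)
        (Uspace (ρ η : Matrix (Fin d) (Fin d) ℝ) p))
      ≤ log C - lam * wordLength S γ + 2 * log K * wordDist S γ η := by
  have : Nonempty (Fin d) := ⟨⟨0, by omega⟩⟩
  have hnorm (g : Γ) : ‖(ρ g : Matrix (Fin d) (Fin d) ℝ)‖ ≤ K ^ wordLength S g :=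
    norm_le_pow_wordLength hS ((Units.coeHom _).comp ρ) hK g
  have hk : ‖(ρ (γ⁻¹ * η) : Matrix (Fin d) (Fin d) ℝ)‖ *
      ‖(ρ (γ⁻¹ * η) : Matrix (Fin d) (Fin d) ℝ)⁻¹‖ ≤ K ^ wordDist S γ η * K ^ wordDist S γ η := by
    have h₁ := hnorm (γ⁻¹ * η)
    have h₂ := hnorm (γ⁻¹ * η)⁻¹
    rw [wordLength_inv_mul hS] at h₁
    rw [wordLength_inv hS, wordLength_inv_mul hS, map_inv, Matrix.coe_units_inv] at h₂
    exact mul_le_mul h₁ h₂ (norm_nonneg _) (by positivity)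
  have hρη : (ρ η : Matrix (Fin d) (Fin d) ℝ) = ρ γ * ρ (γ⁻¹ * η) := by
    rw [← Units.val_mul, ← map_mul, mul_inv_cancel_left]
  rw [hρη] at hη hne ⊢
  have hUA := finrank_Uspace (ρ γ).isUnit hp1 hpd hγ
  have hUB := finrank_Uspace ((ρ γ).isUnit.mul (ρ (γ⁻¹ * η)).isUnit) hp1 hpd hη
  have hD := grDist_pos (Uspace_ne_bot (ρ γ).isUnit hp1 hpd hγ) fun hle =>
    hne (Submodule.eq_of_le_of_finrank_eq hle (hUB.trans hUA.symm)).symm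
  calc _ ≤ log (C * exp (-lam * wordLength S γ) * (K ^ wordDist S γ η * K ^ wordDist S γ η)) := by
        refine log_le_log hD ((grDist_Uspace_mul_le (ρ γ).isUnit (ρ (γ⁻¹ * η)).isUnit hp1 hpd
          hη).trans (mul_le_mul (hdom γ) hk (by positivity) (by positivity)))
    _ = log C - lam * wordLength S γ + 2 * log K * wordDist S γ η := by
        rw [log_mul (by positivity) (by positivity), log_mul (by positivity) (by positivity),
          log_exp, log_mul (by positivity) (by positivity), log_pow]
        ring

end Representation

lemma exists_linear_lower_bound {lam L a : ℝ} (hlam : 0 < lam) (hL : 0 ≤ L) (ha : 0 ≤ a) :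
    ∃ ν ∈ Set.Ioo (0 : ℝ) 1, ∃ c₀ > (0 : ℝ), ∃ c₁ > (0 : ℝ), ∀ x y n t : ℝ, 0 ≤ x → 0 ≤ n →
      y ≤ x + n → t ≤ a - lam * x + L * n → ν * (x + y) - c₀ - c₁ * |t| ≤ n := by
  set c₁ := (lam + L + 1)⁻¹
  have hc₁ : 0 < c₁ := by positivity
  have hc₁' : c₁ * (lam + L + 1) = 1 := inv_mul_cancel₀ (by positivity)
  refine ⟨c₁ * lam / 2, ⟨by positivity, by nlinarith⟩, c₁ * a + 1, by positivity, c₁, hc₁,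
    fun x y n t hx hn hy ht => ?_⟩
  have hlin : lam * x ≤ a + L * n + |t| := by linarith [neg_abs_le t]
  have hν : 0 ≤ c₁ * lam / 2 := by positivity
  nlinarith [mul_le_mul_of_nonneg_left hlin hc₁.le, mul_le_mul_of_nonneg_left hy hν,
    congrArg (· * n) hc₁', mul_nonneg hc₁.le hn]

theorem distance_lower_bound_lemma_general
    {d : ℕ} (p : ℕ) (hp1 : 1 ≤ p) (hpd : p < d)
    {Γ : Type*} [Group Γ] (S : Set Γ) (hS : IsSymmGen S)
    (ρ : Γ →* Matrix.GeneralLinearGroup (Fin d) ℝ)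
    (C lam : ℝ) (hC : 1 ≤ C) (hlam : 0 < lam)
    (hdom : IsDominatedRep S ρ p C lam)
    (ℓ₀ : ℕ) (hℓ₀ : C * Real.exp (-lam * (ℓ₀ : ℝ)) < 1) :
    ∃ ν : ℝ, ν ∈ Set.Ioo (0:ℝ) 1 ∧ ∃ c₀ > (0:ℝ), ∃ c₁ > (0:ℝ),
      ∀ γ η : Γ, ℓ₀ ≤ wordLength S γ → ℓ₀ ≤ wordLength S η →
        Uspace ((ρ γ : Matrix (Fin d) (Fin d) ℝ)) p ≠
          Uspace ((ρ η : Matrix (Fin d) (Fin d) ℝ)) p →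
        ν * ((wordLength S γ : ℝ) + (wordLength S η : ℝ)) - c₀ -
            c₁ * |Real.log (grDist (Uspace ((ρ γ : Matrix (Fin d) (Fin d) ℝ)) p)
              (Uspace ((ρ η : Matrix (Fin d) (Fin d) ℝ)) p))|
          ≤ (wordDist S γ η : ℝ) := by
  obtain ⟨K, hK1, hK⟩ : ∃ K ≥ (1 : ℝ), ∀ s ∈ S, ‖(ρ s : Matrix (Fin d) (Fin d) ℝ)‖ ≤ K := by
    obtain ⟨K, hK⟩ := (hS.finite.image fun s => ‖(ρ s : Matrix (Fin d) (Fin d) ℝ)‖).bddAbove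
    exact ⟨max K 1, le_max_right _ _, fun s hs => (hK ⟨s, hs, rfl⟩).trans (le_max_left _ _)⟩
  obtain ⟨ν, hν, c₀, hc₀, c₁, hc₁, hbound⟩ :=
    exists_linear_lower_bound hlam (mul_nonneg zero_le_two (log_nonneg hK1)) (log_nonneg hC)
  have hgap {γ : Γ} (hγ : ℓ₀ ≤ wordLength S γ) : hasGap (ρ γ : Matrix (Fin d) (Fin d) ℝ) p :=
    hasGap_of_isDominatedRep hp1 hpd.le hdom (by linarith) hlam.le hℓ₀ hγ
  refine ⟨ν, hν, c₀, hc₀, c₁, hc₁, fun γ η hγ hη hne => hbound _ _ _ _ (Nat.cast_nonneg _)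
    (Nat.cast_nonneg _) (by exact_mod_cast wordLength_le_add_wordDist hS γ η) ?_⟩
  exact log_grDist_Uspace_le hS hp1 hpd hdom (by linarith) (by linarith) hK (hgap hγ) (hgap hη) hne

/-- Lower bound for the word distance in terms of the distance of
the `U_p`-spaces. -/
theorem distance_lower_bound_lemma
    {d : ℕ} (hd : 2 ≤ d) (p : ℕ) (hp1 : 1 ≤ p) (hpd : p < d)
    {Γ : Type*} [Group Γ] (S : Set Γ) (hS : IsSymmGen S)
    (ρ : Γ →* Matrix.GeneralLinearGroup (Fin d) ℝ)
    (C lam : ℝ) (hC : 1 ≤ C) (hlam : 0 < lam)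
    (hdom : IsDominatedRep S ρ p C lam)
    (ℓ₀ : ℕ) (hℓ₀ : C * Real.exp (-lam * (ℓ₀ : ℝ)) < 1) :
    ∃ ν : ℝ, ν ∈ Set.Ioo (0:ℝ) 1 ∧ ∃ c₀ > (0:ℝ), ∃ c₁ > (0:ℝ),
      ∀ γ η : Γ, ℓ₀ ≤ wordLength S γ → ℓ₀ ≤ wordLength S η →
        Uspace ((ρ γ : Matrix (Fin d) (Fin d) ℝ)) p ≠
          Uspace ((ρ η : Matrix (Fin d) (Fin d) ℝ)) p →
        ν * ((wordLength S γ : ℝ) + (wordLength S η : ℝ)) - c₀ -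
            c₁ * |Real.log (grDist (Uspace ((ρ γ : Matrix (Fin d) (Fin d) ℝ)) p)
              (Uspace ((ρ η : Matrix (Fin d) (Fin d) ℝ)) p))|
          ≤ (wordDist S γ η : ℝ) :=
  distance_lower_bound_lemma_general p hp1 hpd S hS ρ C lam hC hlam hdom ℓ₀ hℓ₀

end Paper
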